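/- arXiv:2009.01185 — 5 statements merged into one kernel-verified Lean document; each statement's English description precedes it below -/
import Mathlib

section
/- Let c ∈ (0,1) and ε ∈ (0, 2c/(3k)). Let y ∈ Ω_c and x ∈ Ω_{2c/3}, and write n_i = |y^{-1}(i)| for i ∈ [k]. Suppose that for every i ∈ [k], max_{j∈[k]} t_{j,i}(x,y) ≥ n_i − nε. For each i ∈ [k], let w(i) ∈ [k] be such that t_{w(i),i}(x,y) = max_{j∈[k]} t_{j,i}(x,y). Then w is a bijection from [k] to [k]. -/
open Finset

/-
If some community `j` of `x` were not of the form `w i`, then for every `i` the counts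
`t_{j,i}` and `t_{w(i),i}` are counts of disjoint parts of `y⁻¹(i)`, so `t_{j,i} ≤ nε`.
Summing over `i` gives `|x⁻¹(j)| ≤ knε < 2cn/3`, contradicting `x ∈ Ω_{2c/3}`.
Hence `w` is surjective, so bijective.
-/

/-- `t_{i,j}(x,z) = |x⁻¹(i) ∩ z⁻¹(j)|`. -/
def tcount {n k : ℕ} (x z : Fin n → Fin k) (i j : Fin k) : ℕ :=
  (Finset.univ.filter fun v => x v = i ∧ z v = j).card

/-- `Ω_c`: community assignment mappings in which each community has at least `c·n` vertices. -/
def OmegaC {n k : ℕ} (c : ℝ) : Set (Fin n → Fin k) :=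
  {x | ∀ i : Fin k, c * n ≤ ((Finset.univ.filter fun v => x v = i).card : ℝ)}

section tcount

variable {n k : ℕ} (x y : Fin n → Fin k)

lemma card_fiber_eq_sum_tcount (j : Fin k) :
    (univ.filter fun v => x v = j).card = ∑ i, tcount x y j i := by
  rw [card_eq_sum_card_fiberwise (f := y) (t := univ) (fun _ _ => mem_univ _)]
  simp only [tcount, filter_filter]

lemma tcount_add_tcount_le {j j' : Fin k} (h : j ≠ j') (i : Fin k) :
    tcount x y j i + tcount x y j' i ≤ (univ.filter fun v => y v = i).card := by
  unfold tcount
  rw [← card_union_of_disjoint]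
  · exact card_le_card fun v hv => by simp only [mem_union, mem_filter] at hv ⊢; tauto
  · exact disjoint_filter.mpr fun v _ hj hj' => h (hj.1.symm.trans hj'.1)

variable {x y} {w : Fin k → Fin k} {δ : ℝ}

lemma tcount_le_of_ne
    (hmax : ∀ i, ((univ.filter fun v => y v = i).card : ℝ) - δ ≤ tcount x y (w i) i)
    {i j : Fin k} (hj : j ≠ w i) : (tcount x y j i : ℝ) ≤ δ := by
  have hdisj :
      (tcount x y j i : ℝ) + tcount x y (w i) i ≤ (univ.filter fun v => y v = i).card := by
    exact_mod_cast tcount_add_tcount_le x y hj i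
  linarith [hmax i]

lemma surjective_of_mul_lt_card_fiber
    (hmax : ∀ i, ((univ.filter fun v => y v = i).card : ℝ) - δ ≤ tcount x y (w i) i)
    (hcard : ∀ j, k * δ < (univ.filter fun v => x v = j).card) : Function.Surjective w := by
  by_contra hw
  obtain ⟨j, hj⟩ := not_forall.mp hw
  have hsum : ((univ.filter fun v => x v = j).card : ℝ) ≤ k * δ := by
    calc ((univ.filter fun v => x v = j).card : ℝ) = ∑ i, (tcount x y j i : ℝ) := by
          exact_mod_cast card_fiber_eq_sum_tcount x y j
      _ ≤ ∑ _i : Fin k, δ :=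
          sum_le_sum fun i _ => tcount_le_of_ne hmax fun h => hj ⟨i, h.symm⟩
      _ = k * δ := by simp
  exact (hcard j).not_ge hsum

end tcount

/-- if `y ∈ Ω_c`, `x ∈ Ω_{2c/3}`, `ε ∈ (0, 2c/(3k))` and for every `i`,
`max_j t_{j,i}(x,y) ≥ n_i − nε`, then any map `w` with `t_{w(i),i}(x,y) = max_j t_{j,i}(x,y)`
is a bijection of `[k]`. -/
theorem stmt4 {n k : ℕ} (hkn : k ≤ n) (hk : 2 ≤ k)
    (c : ℝ)
    (ε : ℝ) (hε : ε ∈ Set.Ioo (0 : ℝ) (2 * c / (3 * k)))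
    (y : Fin n → Fin k)
    (x : Fin n → Fin k) (hx : x ∈ OmegaC (2 * c / 3))
    (hmax : ∀ i : Fin k,
      (((Finset.univ.filter fun v => y v = i).card : ℝ) - n * ε) ≤
        ((Finset.univ.sup' (Finset.univ_nonempty_iff.mpr ⟨⟨0, by omega⟩⟩) fun j => tcount x y j i : ℕ) : ℝ))
    (w : Fin k → Fin k)
    (hw : ∀ i j : Fin k, tcount x y j i ≤ tcount x y (w i) i) :
    Function.Bijective w := by
  have hn : (0 : ℝ) < n := by exact_mod_cast (by omega : 0 < n)
  have hkpos : (0 : ℝ) < k := by exact_mod_cast (by omega : 0 < k)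
  have hkε : k * ε < 2 * c / 3 := by
    have := (lt_div_iff₀ (by positivity : (0 : ℝ) < 3 * k)).mp hε.2
    linarith
  have hmax' : ∀ i, ((univ.filter fun v => y v = i).card : ℝ) - n * ε ≤ tcount x y (w i) i :=
    fun i => (hmax i).trans (by exact_mod_cast sup'_le _ _ fun j _ => hw i j)
  refine Finite.surjective_iff_bijective.mp (surjective_of_mul_lt_card_fiber hmax' fun j => ?_)
  calc (k : ℝ) * (n * ε) = k * ε * n := by ring
    _ < 2 * c / 3 * n := mul_lt_mul_of_pos_right hkε hn
    _ ≤ _ := hx j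
end

section
/- Let c ∈ (0,1), let n_1,...,n_k be positive integers with n_1+...+n_k = n, let y ∈ Ω_{n_1,...,n_k} ∩ Ω_c, and let x ∈ Ω_{n_1,...,n_k}. For each i ∈ [k], let w(i) ∈ [k] be such that t_{w(i),i}(x,y) = max_{j∈[k]} t_{j,i}(x,y). Then: (1) if ε ∈ (0, c/k) and max_{j∈[k]} t_{j,i}(x,y) ≥ n_i − nε for every i ∈ [k], then w is a bijection from [k] to [k]; (2) if in addition there exist i,j ∈ [k] with n_i ≠ n_j and ε < min{|n_i − n_j|/n : i,j ∈ [k], n_i ≠ n_j}, then n_i = n_{w(i)} for every i ∈ [k]. -/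
open Finset

/-- `Ω_{n₁,…,n_k}`: community assignment mappings with exactly `nsize i` vertices in
community `i`. -/
def OmegaSizes {n k : ℕ} (nsize : Fin k → ℕ) : Set (Fin n → Fin k) :=
  {x | ∀ i : Fin k, (Finset.univ.filter fun v => x v = i).card = nsize i}

/-!
View `t(x, y)` as a `k × k` matrix whose rows are the communities of `x` and whose columns are
those of `y`. Summing the hypothesis over the columns, the cells `(w i, i)` hold at least
`n - k n ε > n - c n` vertices. These cells lie in distinct columns, so if some row `j` were
missed by `w` they would all avoid row `j`, which alone has at least `c n` vertices; hence `w` is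
onto. For the second part, `n_{w i} < n_i` is impossible, because the cell `(w i, i)` fits in row
`w i` and yet holds more than `n_i - (n_i - n_{w i})` vertices; a permutation that never
decreases the row sizes preserves each of them.
-/

theorem Function.Bijective.eq_comp_of_le_comp {ι M : Type*} [Fintype ι] [AddCommMonoid M]
    [PartialOrder M] [IsOrderedCancelAddMonoid M] {σ : ι → ι} (hσ : Function.Bijective σ)
    {f : ι → M} (h : ∀ i, f i ≤ f (σ i)) (i : ι) : f i = f (σ i) :=
  (sum_eq_sum_iff_of_le fun i _ => h i).1 (hσ.sum_comp f).symm i (mem_univ i)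

section CommunityOverlap

variable {n k : ℕ}

theorem tcount_le_card_fiber (x z : Fin n → Fin k) (i j : Fin k) :
    tcount x z i j ≤ #{v | x v = i} :=
  card_le_card fun _ hv => by
    simp only [mem_filter] at hv ⊢
    exact ⟨hv.1, hv.2.1⟩

theorem sum_card_fiber (x : Fin n → Fin k) : ∑ i, #{v | x v = i} = n := by
  simpa using (card_eq_sum_card_fiberwise (f := x) (s := univ) (t := univ) (by simp)).symm

theorem sum_eq_of_mem_omegaSizes {nsize : Fin k → ℕ} {x : Fin n → Fin k}
    (hx : x ∈ OmegaSizes nsize) : ∑ i, nsize i = n := by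
  rw [← sum_card_fiber x]
  exact sum_congr rfl fun i _ => (hx i).symm

theorem sum_tcount_eq_card (x z : Fin n → Fin k) (w : Fin k → Fin k) :
    ∑ i, tcount x z (w i) i = #{v | x v = w (z v)} := by
  rw [card_eq_sum_card_fiberwise (f := z) (t := univ) (by simp)]
  refine sum_congr rfl fun i _ => ?_
  rw [filter_filter, tcount]
  congr 1
  ext v
  simp only [mem_filter, mem_univ, true_and]
  exact and_congr_left fun hz => by rw [hz]

theorem sum_tcount_add_card_fiber_le (x z : Fin n → Fin k) {w : Fin k → Fin k} {j : Fin k}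
    (hj : j ∉ Set.range w) : ∑ i, tcount x z (w i) i + #{v | x v = j} ≤ n :=
  calc _ ≤ #{v | ¬ x v = j} + #{v | x v = j} := by
        rw [sum_tcount_eq_card]
        refine Nat.add_le_add_right (card_le_card fun v hv => ?_) _
        simp only [mem_filter, mem_univ, true_and] at hv ⊢
        exact hv ▸ fun h => hj ⟨z v, h⟩
    _ = n := by rw [add_comm, card_filter_add_card_filter_not, card_univ, Fintype.card_fin]

theorem surjective_of_le_tcount {nsize : Fin k → ℕ} {x z : Fin n → Fin k} {w : Fin k → Fin k}
    {c ε : ℝ} (hn : 0 < n) (hkε : k * ε < c) (hx : x ∈ OmegaSizes nsize)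
    (hz : z ∈ OmegaSizes nsize ∩ OmegaC c)
    (hmax : ∀ i, (nsize i : ℝ) - n * ε ≤ tcount x z (w i) i) : Function.Surjective w := by
  intro j
  by_contra hj
  have hcount : (∑ i, tcount x z (w i) i : ℝ) + nsize j ≤ n := by
    exact_mod_cast hx j ▸ sum_tcount_add_card_fiber_le x z hj
  have hlow : (n : ℝ) - k * (n * ε) ≤ ∑ i, (tcount x z (w i) i : ℝ) :=
    calc (n : ℝ) - k * (n * ε) = ∑ i, ((nsize i : ℝ) - n * ε) := by
          simp [sum_sub_distrib, ← Nat.cast_sum, sum_eq_of_mem_omegaSizes hx]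
      _ ≤ _ := sum_le_sum fun i _ => hmax i
  have hsize : c * n ≤ nsize j := hz.1 j ▸ hz.2 j
  nlinarith [mul_lt_mul_of_pos_right hkε (Nat.cast_pos.2 hn : (0 : ℝ) < n)]

theorem le_nsize_of_le_tcount {nsize : Fin k → ℕ} {x z : Fin n → Fin k} {w : Fin k → Fin k}
    {ε : ℝ} (hn : 0 < n) (hx : x ∈ OmegaSizes nsize) {i : Fin k}
    (hgap : nsize i ≠ nsize (w i) → ε < |(nsize i : ℝ) - nsize (w i)| / n)
    (hmax : (nsize i : ℝ) - n * ε ≤ tcount x z (w i) i) : nsize i ≤ nsize (w i) := by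
  by_contra! hlt
  have hε := hgap hlt.ne'
  have hlt' : (nsize (w i) : ℝ) < nsize i := by exact_mod_cast hlt
  rw [abs_of_pos (sub_pos.2 hlt'), lt_div_iff₀ (Nat.cast_pos.2 hn)] at hε
  have hcell : (tcount x z (w i) i : ℝ) ≤ nsize (w i) := by
    exact_mod_cast hx (w i) ▸ tcount_le_card_fiber x z (w i) i
  linarith

end CommunityOverlap

theorem stmt5_general {n k : ℕ} (hkn : k ≤ n)
    (nsize : Fin k → ℕ)
    (c : ℝ)
    (y : Fin n → Fin k) (hy : y ∈ OmegaSizes nsize ∩ OmegaC c)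
    (x : Fin n → Fin k) (hx : x ∈ OmegaSizes nsize)
    (w : Fin k → Fin k)
    (ε : ℝ) (hε : ε ∈ Set.Ioo (0 : ℝ) (c / k))
    (hmax : ∀ i : Fin k, ((nsize i : ℝ) - n * ε) ≤ (tcount x y (w i) i : ℝ)) :
    Function.Bijective w ∧
      (((∃ i j : Fin k, nsize i ≠ nsize j) ∧
          ∀ i j : Fin k, nsize i ≠ nsize j → ε < |(nsize i : ℝ) - nsize j| / n) →
        ∀ i : Fin k, nsize i = nsize (w i)) := by
  have hk : 0 < k := Nat.pos_of_ne_zero fun hk0 => by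
    simp only [hk0, Nat.cast_zero, div_zero, Set.mem_Ioo] at hε
    exact hε.1.asymm hε.2
  have hn : 0 < n := hk.trans_le hkn
  have hkε : k * ε < c := (lt_div_iff₀' (Nat.cast_pos.2 hk)).1 hε.2
  have hbij : Function.Bijective w :=
    Finite.surjective_iff_bijective.1 (surjective_of_le_tcount hn hkε hx hy hmax)
  exact ⟨hbij, fun ⟨_, hgap⟩ =>
    hbij.eq_comp_of_le_comp fun i => le_nsize_of_le_tcount hn hx (hgap i (w i)) (hmax i)⟩

/-- for `y ∈ Ω_{n₁,…,n_k} ∩ Ω_c` and `x ∈ Ω_{n₁,…,n_k}`, with `w` realizing the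
columnwise maxima of `t_{·,·}(x,y)`: (1) if `ε ∈ (0, c/k)` and every columnwise maximum is at
least `n_i − nε`, then `w` is a bijection; (2) if in addition not all `n_i` are equal and `ε`
is smaller than every `|n_i − n_j|/n` with `n_i ≠ n_j`, then `n_i = n_{w(i)}` for all `i`. -/
theorem stmt5 {n k : ℕ} (hkn : k ≤ n) (hk : 2 ≤ k)
    (nsize : Fin k → ℕ) (hpos : ∀ i, 0 < nsize i) (hsum : ∑ i, nsize i = n)
    (c : ℝ) (hc : c ∈ Set.Ioo (0 : ℝ) 1)
    (y : Fin n → Fin k) (hy : y ∈ OmegaSizes nsize ∩ OmegaC c)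
    (x : Fin n → Fin k) (hx : x ∈ OmegaSizes nsize)
    (w : Fin k → Fin k)
    (hw : ∀ i j : Fin k, tcount x y j i ≤ tcount x y (w i) i)
    (ε : ℝ) (hε : ε ∈ Set.Ioo (0 : ℝ) (c / k))
    (hmax : ∀ i : Fin k, ((nsize i : ℝ) - n * ε) ≤ (tcount x y (w i) i : ℝ)) :
    Function.Bijective w ∧
      (((∃ i j : Fin k, nsize i ≠ nsize j) ∧
          ∀ i j : Fin k, nsize i ≠ nsize j → ε < |(nsize i : ℝ) - nsize j| / n) →
        ∀ i : Fin k, nsize i = nsize (w i)) :=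
  stmt5_general hkn nsize c y hy x hx w ε hε hmax
end

section
/- Let y ∈ Ω be the true community assignment. For every x ∈ Ω, Pr(f(x) − f(y) ≤ 0) ≤ exp(−L_Φ(x,y)/8). Consequently, for any subset S ⊆ Ω, the probability that there exists x ∈ S with C(x) ≠ C(y) and f(x) ≤ f(y) is at most Σ exp(−L_Φ(x,y)/8), where the sum runs over one representative x of each equivalence class C(x) of elements of S with C(x) ≠ C(y); in particular, 1 − Pr(f(y) < min{f(x) : x ∈ S, C(x) ≠ C(y)}) is bounded by this sum. -/
/-!
Write `Z = ⟨Φ*(A_x − A_y), W⟩`. Expanding `K_y = A_y + Σ*W` gives `f(x) − f(y) = L_Φ(x,y) − 2Z`,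
and `Z` is a weighted sum of independent standard Gaussians with `mgf Z t = exp (L_Φ(x,y) t² / 2)`.
Chernoff's bound at `t = 1/2` then gives
`Pr(Z ≥ L_Φ/2) ≤ exp(−L_Φ/4) · exp(L_Φ/8) = exp(−L_Φ/8)`.
Since `f(x)` depends on `x` only through `A_x`, which is constant on equivalence classes, the
event of the second claim is covered by the events `f(r) ≤ f(y)` for the representatives `r`,
and a union bound finishes.
-/

open Finset MeasureTheory ProbabilityTheory

/-- The `p × n` matrix `A_x` with entries `(A_x)_{i,j} = θ(x, i, x(j))`. -/
def matA {n k p : ℕ} (θ : (Fin n → Fin k) → Fin p → Fin k → ℝ)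
    (x : Fin n → Fin k) : Fin p → Fin n → ℝ :=
  fun i j => θ x i (x j)

/-- Inner product of two `p × n` matrices. -/
def mInner {n p : ℕ} (P Q : Fin p → Fin n → ℝ) : ℝ :=
  ∑ i, ∑ j, P i j * Q i j

/-- Hadamard (entrywise) product. -/
def hadamard {n p : ℕ} (P Q : Fin p → Fin n → ℝ) : Fin p → Fin n → ℝ :=
  fun i j => P i j * Q i j

/-- The matrix `Φ` of reciprocals of the entries of `Σ`. -/
noncomputable def PhiMat {n p : ℕ} (σ : Fin p → Fin n → ℝ) : Fin p → Fin n → ℝ :=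
  fun i j => 1 / σ i j

/-- `L_Φ(x,y) = ‖Φ*(A_x − A_y)‖²`. -/
noncomputable def LPhi {n k p : ℕ} (θ : (Fin n → Fin k) → Fin p → Fin k → ℝ)
    (σ : Fin p → Fin n → ℝ) (x y : Fin n → Fin k) : ℝ :=
  mInner (hadamard (PhiMat σ) (fun i j => matA θ x i j - matA θ y i j))
    (hadamard (PhiMat σ) (fun i j => matA θ x i j - matA θ y i j))

/-- `f(x) = −2⟨Φ*K, Φ*A_x⟩ + ‖Φ*A_x‖²` for a fixed observation matrix `K`. -/
noncomputable def fStat {n k p : ℕ} (θ : (Fin n → Fin k) → Fin p → Fin k → ℝ)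
    (σ : Fin p → Fin n → ℝ) (K : Fin p → Fin n → ℝ) (x : Fin n → Fin k) : ℝ :=
  -2 * mInner (hadamard (PhiMat σ) K) (hadamard (PhiMat σ) (matA θ x)) +
    mInner (hadamard (PhiMat σ) (matA θ x)) (hadamard (PhiMat σ) (matA θ x))

/-- The observation `K_y = A_y + Σ*W` for a noise realization `W`. -/
def obsK {n k p : ℕ} (θ : (Fin n → Fin k) → Fin p → Fin k → ℝ)
    (σ : Fin p → Fin n → ℝ) (y : Fin n → Fin k) (W : Fin p → Fin n → ℝ) :
    Fin p → Fin n → ℝ :=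
  fun i j => matA θ y i j + σ i j * W i j

/-- `x' ∈ C(x)`: `x'` is equivalent to `x`. -/
def equivC {n k p : ℕ} (θ : (Fin n → Fin k) → Fin p → Fin k → ℝ)
    (x x' : Fin n → Fin k) : Prop :=
  (∀ i j : Fin n, x i = x j ↔ x' i = x' j) ∧
    ∀ (i : Fin p) (j : Fin n), θ x i (x j) = θ x' i (x' j)

namespace ProbabilityTheory

open Real

variable {ι Ω : Type*} [Fintype ι] [MeasurableSpace Ω] {μ : Measure Ω} {X : ι → Ω → ℝ}

theorem mgf_sum_mul_of_iIndepFun_gaussianReal (hindep : iIndepFun X μ)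
    (hX : ∀ i, μ.map (X i) = gaussianReal 0 1) (d : ι → ℝ) (t : ℝ) :
    mgf (fun ω => ∑ i, d i * X i ω) μ t = exp ((∑ i, d i ^ 2) * t ^ 2 / 2) := by
  have hmeas (i : ι) : AEMeasurable (X i) μ :=
    aemeasurable_of_map_neZero (by rw [hX i]; infer_instance)
  have hsum : (fun ω => ∑ i, d i * X i ω) = ∑ i, fun ω => d i * X i ω := by
    ext ω; simp
  have hscaled : iIndepFun (fun i ω => d i * X i ω) μ :=
    hindep.comp (fun i u => d i * u) fun i => measurable_const_mul _
  rw [hsum, hscaled.mgf_sum₀ (fun i => (hmeas i).const_mul _), sum_mul, sum_div,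
    exp_sum]
  refine Finset.prod_congr rfl fun i _ => ?_
  rw [mgf_const_mul, mgf_gaussianReal (hX i)]
  push_cast
  ring_nf

theorem measure_half_sum_sq_le_sum_mul_le [IsProbabilityMeasure μ] (hindep : iIndepFun X μ)
    (hX : ∀ i, μ.map (X i) = gaussianReal 0 1) (d : ι → ℝ) :
    μ {ω | (∑ i, d i ^ 2) / 2 ≤ ∑ i, d i * X i ω} ≤
      ENNReal.ofReal (exp (-(∑ i, d i ^ 2) / 8)) := by
  have hmgf := mgf_sum_mul_of_iIndepFun_gaussianReal hindep hX d (1 / 2)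
  have hint : Integrable (fun ω => exp (1 / 2 * ∑ i, d i * X i ω)) μ := by
    rw [← mgf_pos_iff, hmgf]; exact exp_pos _
  have hchernoff := measure_ge_le_exp_mul_mgf ((∑ i, d i ^ 2) / 2) (by norm_num) hint
  rw [hmgf, ← exp_add] at hchernoff
  rw [← ofReal_measureReal]
  refine ENNReal.ofReal_le_ofReal (hchernoff.trans_eq ?_)
  ring_nf

end ProbabilityTheory

section Model

open Real

variable {n k p : ℕ} (θ : (Fin n → Fin k) → Fin p → Fin k → ℝ) (σ : Fin p → Fin n → ℝ)

noncomputable def phiDiff (x y : Fin n → Fin k) (ij : Fin p × Fin n) : ℝ :=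
  PhiMat σ ij.1 ij.2 * (matA θ x ij.1 ij.2 - matA θ y ij.1 ij.2)

theorem LPhi_eq_sum_phiDiff_sq (x y : Fin n → Fin k) :
    LPhi θ σ x y = ∑ ij, phiDiff θ σ x y ij ^ 2 := by
  simp only [LPhi, mInner, hadamard, phiDiff, Fintype.sum_prod_type, sq]

theorem fStat_obsK_sub_fStat_obsK (x y : Fin n → Fin k) (w : Fin p → Fin n → ℝ) :
    fStat θ σ (obsK θ σ y w) x - fStat θ σ (obsK θ σ y w) y =
      LPhi θ σ x y - 2 * ∑ ij, phiDiff θ σ x y ij * w ij.1 ij.2 := by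
  simp only [fStat, LPhi, mInner, hadamard, phiDiff, PhiMat, obsK, Fintype.sum_prod_type,
    mul_sum, ← sum_sub_distrib, ← sum_add_distrib]
  refine sum_congr rfl fun i _ => sum_congr rfl fun j _ => ?_
  have hΦ : 1 / σ i j * σ i j * (1 / σ i j) = 1 / σ i j := by
    simpa only [one_div, inv_inv] using mul_inv_mul_cancel (σ i j)⁻¹
  linear_combination (-2 * w i j * (matA θ x i j - matA θ y i j)) * hΦ

theorem fStat_eq_of_equivC {r x : Fin n → Fin k} (h : equivC θ r x) (K : Fin p → Fin n → ℝ) :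
    fStat θ σ K r = fStat θ σ K x := by
  have hA : matA θ r = matA θ x := funext fun i => funext fun j => h.2 i j
  rw [fStat, fStat, hA]

variable {Ω' : Type*} [MeasurableSpace Ω'] {μ : Measure Ω'} [IsProbabilityMeasure μ]
  {W : Ω' → Fin p → Fin n → ℝ}

theorem measure_fStat_obsK_sub_nonpos_le
    (hWindep : iIndepFun (fun (ij : Fin p × Fin n) ω => W ω ij.1 ij.2) μ)
    (hWgauss : ∀ i j, Measure.map (fun ω => W ω i j) μ = gaussianReal 0 1)
    (x y : Fin n → Fin k) :
    μ {ω | fStat θ σ (obsK θ σ y (W ω)) x - fStat θ σ (obsK θ σ y (W ω)) y ≤ 0} ≤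
      ENNReal.ofReal (exp (-(LPhi θ σ x y) / 8)) := by
  have hset : {ω | fStat θ σ (obsK θ σ y (W ω)) x - fStat θ σ (obsK θ σ y (W ω)) y ≤ 0} =
      {ω | (∑ ij, phiDiff θ σ x y ij ^ 2) / 2 ≤ ∑ ij, phiDiff θ σ x y ij * W ω ij.1 ij.2} := by
    ext ω
    simp only [Set.mem_ofPred_eq, fStat_obsK_sub_fStat_obsK, LPhi_eq_sum_phiDiff_sq]
    constructor <;> intro h <;> linarith
  rw [hset, LPhi_eq_sum_phiDiff_sq]
  exact measure_half_sum_sq_le_sum_mul_le hWindep (fun ij => hWgauss ij.1 ij.2) _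

theorem measure_exists_fStat_obsK_le_le
    (hWindep : iIndepFun (fun (ij : Fin p × Fin n) ω => W ω ij.1 ij.2) μ)
    (hWgauss : ∀ i j, Measure.map (fun ω => W ω i j) μ = gaussianReal 0 1)
    (y : Fin n → Fin k) (S R : Finset (Fin n → Fin k))
    (hRS : ∀ x ∈ S, ¬ equivC θ y x → ∃ r ∈ R, equivC θ r x) :
    μ {ω | ∃ x ∈ S, ¬ equivC θ y x ∧
        fStat θ σ (obsK θ σ y (W ω)) x ≤ fStat θ σ (obsK θ σ y (W ω)) y} ≤
      ∑ r ∈ R, ENNReal.ofReal (exp (-(LPhi θ σ r y) / 8)) := by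
  have hsub : {ω | ∃ x ∈ S, ¬ equivC θ y x ∧
      fStat θ σ (obsK θ σ y (W ω)) x ≤ fStat θ σ (obsK θ σ y (W ω)) y} ⊆
      ⋃ r ∈ R, {ω | fStat θ σ (obsK θ σ y (W ω)) r - fStat θ σ (obsK θ σ y (W ω)) y ≤ 0} := by
    rintro ω ⟨x, hxS, hxy, hle⟩
    obtain ⟨r, hrR, hrx⟩ := hRS x hxS hxy
    refine Set.mem_biUnion hrR ?_
    simp only [Set.mem_ofPred_eq, fStat_eq_of_equivC θ σ hrx]
    linarith
  calc _ ≤ _ := measure_mono hsub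
    _ ≤ _ := measure_biUnion_finset_le R _
    _ ≤ _ := sum_le_sum fun r _ => measure_fStat_obsK_sub_nonpos_le θ σ hWindep hWgauss r y

end Model

theorem stmt9_general {n k p : ℕ}
    (θ : (Fin n → Fin k) → Fin p → Fin k → ℝ)
    (σ : Fin p → Fin n → ℝ)
    {Ω' : Type*} [MeasurableSpace Ω'] (μ : Measure Ω') [IsProbabilityMeasure μ]
    (W : Ω' → Fin p → Fin n → ℝ)
    (hWindep : iIndepFun
      (fun (ij : Fin p × Fin n) ω => W ω ij.1 ij.2) μ)
    (hWgauss : ∀ i j, Measure.map (fun ω => W ω i j) μ = gaussianReal 0 1)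
    (y : Fin n → Fin k)
    (S : Finset (Fin n → Fin k)) (R : Finset (Fin n → Fin k))
    (hRS : ∀ x ∈ S, ¬ equivC θ y x → ∃ r ∈ R, equivC θ r x) :
    (∀ x : Fin n → Fin k,
        μ {ω | fStat θ σ (obsK θ σ y (W ω)) x - fStat θ σ (obsK θ σ y (W ω)) y ≤ 0} ≤
          ENNReal.ofReal (Real.exp (-(LPhi θ σ x y) / 8))) ∧
    μ {ω | ∃ x ∈ S, ¬ equivC θ y x ∧
        fStat θ σ (obsK θ σ y (W ω)) x ≤ fStat θ σ (obsK θ σ y (W ω)) y} ≤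
      ∑ r ∈ R, ENNReal.ofReal (Real.exp (-(LPhi θ σ r y) / 8)) ∧
    1 - μ {ω | ∀ x ∈ S, ¬ equivC θ y x →
        fStat θ σ (obsK θ σ y (W ω)) y < fStat θ σ (obsK θ σ y (W ω)) x} ≤
      ∑ r ∈ R, ENNReal.ofReal (Real.exp (-(LPhi θ σ r y) / 8)) := by
  have hunion := measure_exists_fStat_obsK_le_le θ σ hWindep hWgauss y S R hRS
  refine ⟨fun x => measure_fStat_obsK_sub_nonpos_le θ σ hWindep hWgauss x y, hunion, ?_⟩
  set B := {ω | ∀ x ∈ S, ¬ equivC θ y x →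
    fStat θ σ (obsK θ σ y (W ω)) y < fStat θ σ (obsK θ σ y (W ω)) x}
  have hcompl : Bᶜ = {ω | ∃ x ∈ S, ¬ equivC θ y x ∧
      fStat θ σ (obsK θ σ y (W ω)) x ≤ fStat θ σ (obsK θ σ y (W ω)) y} := by
    ext ω
    simp only [B, Set.mem_compl_iff, Set.mem_ofPred_eq, not_forall, not_lt, exists_prop]
  calc 1 - μ B ≤ μ Bᶜ := by
        rw [tsub_le_iff_left, ← measure_univ (μ := μ)]
        exact measure_univ_le_add_compl B
    _ ≤ _ := hcompl ▸ hunion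

/-- `Pr(f(x) − f(y) ≤ 0) ≤ exp(−L_Φ(x,y)/8)` for every `x`; consequently, for
`S ⊆ Ω` and a system `R` of representatives of the equivalence classes of elements of `S` not
equivalent to `y`, the probability that some `x ∈ S` with `C(x) ≠ C(y)` has `f(x) ≤ f(y)` is
at most `Σ_{r ∈ R} exp(−L_Φ(r,y)/8)`; in particular `1 − Pr(f(y) < min ...)` is bounded by
this sum. -/
theorem stmt9 {n k p : ℕ} (hkn : k ≤ n) (hk : 2 ≤ k) (hp : 1 ≤ p)
    (θ : (Fin n → Fin k) → Fin p → Fin k → ℝ)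
    (σ : Fin p → Fin n → ℝ) (hσ : ∀ i j, 0 < σ i j)
    {Ω' : Type*} [MeasurableSpace Ω'] (μ : Measure Ω') [IsProbabilityMeasure μ]
    (W : Ω' → Fin p → Fin n → ℝ)
    (hWmeas : ∀ i j, Measurable fun ω => W ω i j)
    (hWindep : iIndepFun
      (fun (ij : Fin p × Fin n) ω => W ω ij.1 ij.2) μ)
    (hWgauss : ∀ i j, Measure.map (fun ω => W ω i j) μ = gaussianReal 0 1)
    (y : Fin n → Fin k)
    (S : Finset (Fin n → Fin k)) (R : Finset (Fin n → Fin k))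
    (hRS : ∀ x ∈ S, ¬ equivC θ y x → ∃ r ∈ R, equivC θ r x)
    (hRy : ∀ r ∈ R, ¬ equivC θ y r)
    (hRrep : ∀ r ∈ R, ∀ r' ∈ R, equivC θ r r' → r = r') :
    (∀ x : Fin n → Fin k,
        μ {ω | fStat θ σ (obsK θ σ y (W ω)) x - fStat θ σ (obsK θ σ y (W ω)) y ≤ 0} ≤
          ENNReal.ofReal (Real.exp (-(LPhi θ σ x y) / 8))) ∧
    μ {ω | ∃ x ∈ S, ¬ equivC θ y x ∧
        fStat θ σ (obsK θ σ y (W ω)) x ≤ fStat θ σ (obsK θ σ y (W ω)) y} ≤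
      ∑ r ∈ R, ENNReal.ofReal (Real.exp (-(LPhi θ σ r y) / 8)) ∧
    1 - μ {ω | ∀ x ∈ S, ¬ equivC θ y x →
        fStat θ σ (obsK θ σ y (W ω)) y < fStat θ σ (obsK θ σ y (W ω)) x} ≤
      ∑ r ∈ R, ENNReal.ofReal (Real.exp (-(LPhi θ σ r y) / 8)) :=
  stmt9_general θ σ μ W hWindep hWgauss y S R hRS
end

section
/- Let G_1,...,G_N be independent Gaussian random variables with mean 0, and let ε ∈ (0,1). Suppose N and ε satisfy N^{ε−ε²}·(1−ε)·√(2·log N) / (√(2π)·(1 + 2(1−ε)²·log N)) > 1. Then Pr(max_{i∈[N]} G_i < (1−ε)·√(2·min_{j∈[N]} Var(G_j)·log N)) ≤ exp(−N^{ε}). -/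
/-!
Mills' ratio: since `-(φ(x) · x / (1 + x²))' = φ(x) · (1 - 2 / (1 + x²)²) ≤ φ(x)` for the standard
normal density `φ`, integrating over `[a, ∞)` gives `P(Z ≥ a) ≥ p := φ(a) · a / (1 + a²)`.
Put `a = (1 - ε) √(2 log N)` and let `σ²` be the smallest variance. Every `G_i` has variance
at least `σ²`, so `P(G_i ≥ σ a) ≥ p`, and `N p = N^ε · Q` where `Q > 1` is the quantity in the
hypothesis. By independence `P(max_i G_i < σ a) ≤ (1 - p)^N ≤ exp(-N p) ≤ exp(-N^ε)`.
If `σ² = 0` the threshold is `0`, and the variable of variance `0` vanishes almost surely.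
-/

open MeasureTheory ProbabilityTheory Real Filter Topology

noncomputable def gaussianTailLowerBound (a : ℝ) : ℝ :=
  gaussianPDFReal 0 1 a * (a / (1 + a ^ 2))

lemma gaussianPDFReal_zero_one (x : ℝ) :
    gaussianPDFReal 0 1 x = (√(2 * π))⁻¹ * rexp (-x ^ 2 / 2) := by
  simp [gaussianPDFReal]

lemma gaussianTailLowerBound_nonneg {a : ℝ} (ha : 0 ≤ a) : 0 ≤ gaussianTailLowerBound a :=
  mul_nonneg (gaussianPDFReal_nonneg 0 1 a) (by positivity)

lemma hasDerivAt_gaussianTailLowerBound (x : ℝ) :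
    HasDerivAt gaussianTailLowerBound
      (-(gaussianPDFReal 0 1 x * (1 - 2 / (1 + x ^ 2) ^ 2))) x := by
  show HasDerivAt (fun y ↦ gaussianPDFReal 0 1 y * (y / (1 + y ^ 2))) _ x
  simp_rw [gaussianPDFReal_zero_one]
  have hx : (1 : ℝ) + x ^ 2 ≠ 0 := by positivity
  have hexp : HasDerivAt (fun y : ℝ ↦ rexp (-y ^ 2 / 2)) (rexp (-x ^ 2 / 2) * (-x)) x := by
    refine HasDerivAt.exp (((hasDerivAt_pow 2 x).fun_neg.div_const 2).congr_deriv ?_)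
    push_cast; ring
  have hfrac : HasDerivAt (fun y : ℝ ↦ y / (1 + y ^ 2))
      ((1 * (1 + x ^ 2) - x * (2 * x)) / (1 + x ^ 2) ^ 2) x := by
    have h : HasDerivAt (fun y : ℝ ↦ 1 + y ^ 2) (2 * x) x := by
      simpa using (hasDerivAt_pow 2 x).const_add 1
    exact (hasDerivAt_id x).div h hx
  refine ((hexp.const_mul (√(2 * π))⁻¹).fun_mul hfrac).congr_deriv ?_
  field_simp
  ring

lemma tendsto_gaussianPDFReal_atTop : Tendsto (gaussianPDFReal 0 1) atTop (𝓝 0) := by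
  have h : Tendsto (fun y : ℝ ↦ -y ^ 2 / 2) atTop atBot := by
    simpa only [neg_div, Function.comp_def] using
      tendsto_neg_atTop_atBot.comp ((tendsto_pow_atTop two_ne_zero).atTop_div_const two_pos)
  simpa [funext gaussianPDFReal_zero_one] using
    (tendsto_exp_atBot.comp h).const_mul (√(2 * π))⁻¹

lemma tendsto_gaussianTailLowerBound_atTop : Tendsto gaussianTailLowerBound atTop (𝓝 0) := by
  refine tendsto_gaussianPDFReal_atTop.zero_mul_isBoundedUnder_le ⟨1, ?_⟩
  simp only [eventually_map]
  filter_upwards [eventually_ge_atTop (0 : ℝ)] with y hy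
  rw [Function.comp_apply, Real.norm_of_nonneg (by positivity), div_le_one (by positivity)]
  nlinarith

lemma gaussianTailLowerBound_le_integral_Ioi (a : ℝ) :
    gaussianTailLowerBound a ≤ ∫ x in Set.Ioi a, gaussianPDFReal 0 1 x := by
  have hbound : ∀ x : ℝ, 0 ≤ 2 / (1 + x ^ 2) ^ 2 ∧ 2 / (1 + x ^ 2) ^ 2 ≤ 2 := fun x ↦
    ⟨by positivity, div_le_self zero_le_two (one_le_pow₀ (by nlinarith))⟩
  have hφ : IntegrableOn (gaussianPDFReal 0 1) (Set.Ioi a) :=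
    (integrable_gaussianPDFReal 0 1).integrableOn
  have hint : IntegrableOn (fun x ↦ gaussianPDFReal 0 1 x * (1 - 2 / (1 + x ^ 2) ^ 2))
      (Set.Ioi a) := by
    refine hφ.mono' ?_ (ae_of_all _ fun x ↦ ?_)
    · exact ((measurable_gaussianPDFReal 0 1).mul (by fun_prop)).aestronglyMeasurable
    rw [norm_mul, Real.norm_of_nonneg (gaussianPDFReal_nonneg 0 1 x)]
    refine mul_le_of_le_one_right (gaussianPDFReal_nonneg 0 1 x) (abs_le.2 ⟨?_, ?_⟩) <;>
      linarith [hbound x]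
  have hFTC := integral_Ioi_of_hasDerivAt_of_tendsto'
    (fun x _ ↦ hasDerivAt_gaussianTailLowerBound x) hint.neg tendsto_gaussianTailLowerBound_atTop
  rw [integral_neg, zero_sub, neg_inj] at hFTC
  rw [← hFTC]
  refine setIntegral_mono_on hint hφ measurableSet_Ioi fun x _ ↦ ?_
  exact mul_le_of_le_one_right (gaussianPDFReal_nonneg 0 1 x) (by linarith [hbound x])

lemma ofReal_gaussianTailLowerBound_le_gaussianReal_Ici (a : ℝ) :
    ENNReal.ofReal (gaussianTailLowerBound a) ≤ gaussianReal 0 1 (Set.Ici a) := by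
  rw [gaussianReal_apply_eq_integral 0 one_ne_zero, integral_Ici_eq_integral_Ioi]
  exact ENNReal.ofReal_le_ofReal (gaussianTailLowerBound_le_integral_Ioi a)

lemma mul_gaussianTailLowerBound_eq {x : ℝ} (hx : 1 ≤ x) (ε : ℝ) :
    x * gaussianTailLowerBound ((1 - ε) * √(2 * log x)) =
      x ^ ε * (x ^ (ε - ε ^ 2) * (1 - ε) * √(2 * log x) /
        (√(2 * π) * (1 + 2 * (1 - ε) ^ 2 * log x))) := by
  have hx0 : 0 < x := by linarith
  have hsq : ((1 - ε) * √(2 * log x)) ^ 2 = 2 * (1 - ε) ^ 2 * log x := by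
    rw [mul_pow, sq_sqrt (by positivity [log_nonneg hx])]; ring
  have hexp : x * rexp (-(2 * (1 - ε) ^ 2 * log x) / 2) = x ^ ε * x ^ (ε - ε ^ 2) := by
    rw [← rpow_add hx0, rpow_def_of_pos hx0, mul_comm, ← exp_log hx0, ← exp_add, exp_log hx0]
    ring_nf
  rw [gaussianTailLowerBound, gaussianPDFReal_zero_one, hsq]
  calc _ = x * rexp (-(2 * (1 - ε) ^ 2 * log x) / 2) * ((1 - ε) * √(2 * log x)) /
        (√(2 * π) * (1 + 2 * (1 - ε) ^ 2 * log x)) := by field_simp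
    _ = _ := by rw [hexp]; ring

lemma gaussianReal_Ici_eq_gaussianReal_one_Ici {v : NNReal} (hv : v ≠ 0) (t : ℝ) :
    gaussianReal 0 v (Set.Ici t) = gaussianReal 0 1 (Set.Ici (t / √v)) := by
  have hv' : (0 : ℝ) < √v := by positivity
  have hstd : (gaussianReal 0 v).map (· / √v) = gaussianReal 0 1 := by
    rw [gaussianReal_map_div_const, zero_div]
    congr
    ext
    simp [Real.sq_sqrt, hv]
  rw [← hstd, Measure.map_apply (by fun_prop) measurableSet_Ici]
  congr 1
  ext x
  simp [div_le_div_iff_of_pos_right hv']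

lemma gaussianReal_Ici_le_of_le {v w : NNReal} (hv : v ≠ 0) (hvw : v ≤ w) {t : ℝ}
    (ht : 0 ≤ t) : gaussianReal 0 v (Set.Ici t) ≤ gaussianReal 0 w (Set.Ici t) := by
  have hw : w ≠ 0 := (lt_of_lt_of_le (pos_iff_ne_zero.2 hv) hvw).ne'
  rw [gaussianReal_Ici_eq_gaussianReal_one_Ici hv, gaussianReal_Ici_eq_gaussianReal_one_Ici hw]
  refine measure_mono (Set.Ici_subset_Ici.2 ?_)
  gcongr

lemma prob_compl_le_ofReal_exp_neg {α : Type*} [MeasurableSpace α] {P : Measure α}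
    [IsProbabilityMeasure P] {s : Set α} (hs : MeasurableSet s) {p : ℝ} (hp : 0 ≤ p)
    (hps : ENNReal.ofReal p ≤ P s) : P sᶜ ≤ ENNReal.ofReal (rexp (-p)) := by
  rw [prob_compl_eq_one_sub hs]
  calc 1 - P s ≤ 1 - ENNReal.ofReal p := tsub_le_tsub_left hps 1
    _ = ENNReal.ofReal (1 - p) := by rw [ENNReal.ofReal_sub 1 hp, ENNReal.ofReal_one]
    _ ≤ ENNReal.ofReal (rexp (-p)) :=
        ENNReal.ofReal_le_ofReal (by linarith [add_one_le_exp (-p)])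

section

variable {Ω : Type*} [MeasurableSpace Ω] {μ : Measure Ω}

lemma measure_preimage_eq_of_map_eq_gaussianReal {X : Ω → ℝ} {m : ℝ} {v : NNReal}
    (hX : μ.map X = gaussianReal m v) {s : Set ℝ} (hs : MeasurableSet s) :
    μ (X ⁻¹' s) = gaussianReal m v s := by
  have hne : μ.map X ≠ 0 := hX ▸ IsProbabilityMeasure.ne_zero _
  rw [← hX, Measure.map_apply_of_aemeasurable (.of_map_ne_zero hne) hs]

lemma measure_preimage_Iio_le_ofReal_exp_neg {X : Ω → ℝ} {σ2 v : NNReal}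
    (hX : μ.map X = gaussianReal 0 v) (hσ2 : σ2 ≠ 0) (hσ2v : σ2 ≤ v) {a : ℝ} (ha : 0 ≤ a) :
    μ (X ⁻¹' Set.Iio (√σ2 * a)) ≤ ENNReal.ofReal (rexp (-gaussianTailLowerBound a)) := by
  have hσ : 0 < √(σ2 : ℝ) := by positivity
  have htail : ENNReal.ofReal (gaussianTailLowerBound a) ≤
      gaussianReal 0 v (Set.Ici (√σ2 * a)) :=
    calc ENNReal.ofReal (gaussianTailLowerBound a) ≤ gaussianReal 0 1 (Set.Ici a) :=
          ofReal_gaussianTailLowerBound_le_gaussianReal_Ici a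
      _ = gaussianReal 0 σ2 (Set.Ici (√σ2 * a)) := by
          rw [gaussianReal_Ici_eq_gaussianReal_one_Ici hσ2, mul_div_cancel_left₀ a hσ.ne']
      _ ≤ gaussianReal 0 v (Set.Ici (√σ2 * a)) :=
          gaussianReal_Ici_le_of_le hσ2 hσ2v (by positivity)
  rw [measure_preimage_eq_of_map_eq_gaussianReal hX measurableSet_Iio, ← Set.compl_Ici]
  exact prob_compl_le_ofReal_exp_neg measurableSet_Ici (gaussianTailLowerBound_nonneg ha) htail

lemma ProbabilityTheory.iIndepFun.measure_sup'_lt {ι : Type*} [Fintype ι] {X : ι → Ω → ℝ}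
    (hX : iIndepFun X μ) (hι : (Finset.univ : Finset ι).Nonempty) (t : ℝ) :
    μ {ω | Finset.univ.sup' hι (fun i ↦ X i ω) < t} = ∏ i, μ (X i ⁻¹' Set.Iio t) := by
  have hevent : {ω | Finset.univ.sup' hι (fun i ↦ X i ω) < t} = ⋂ i, X i ⁻¹' Set.Iio t := by
    ext ω
    simp [Finset.sup'_lt_iff]
  rw [hevent]
  exact hX.meas_iInter fun i ↦ ⟨Set.Iio t, measurableSet_Iio, rfl⟩

lemma ProbabilityTheory.iIndepFun.measure_sup'_lt_le_ofReal_exp_neg {ι : Type*} [Fintype ι]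
    {X : ι → Ω → ℝ} (hX : iIndepFun X μ) (hι : (Finset.univ : Finset ι).Nonempty) {t p : ℝ}
    (h : ∀ i, μ (X i ⁻¹' Set.Iio t) ≤ ENNReal.ofReal (rexp (-p))) :
    μ {ω | Finset.univ.sup' hι (fun i ↦ X i ω) < t} ≤
      ENNReal.ofReal (rexp (-(Fintype.card ι * p))) := by
  calc μ {ω | Finset.univ.sup' hι (fun i ↦ X i ω) < t} = ∏ i, μ (X i ⁻¹' Set.Iio t) :=
        hX.measure_sup'_lt hι t
    _ ≤ ∏ _i : ι, ENNReal.ofReal (rexp (-p)) := Finset.prod_le_prod' fun i _ ↦ h i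
    _ = ENNReal.ofReal (rexp (-(Fintype.card ι * p))) := by
        rw [Finset.prod_const, Finset.card_univ, ← ENNReal.ofReal_pow (exp_nonneg _),
          ← exp_nat_mul, mul_neg]

end

/-- for independent centered Gaussian random variables `G₁,…,G_N` and
`ε ∈ (0,1)` with `N^{ε−ε²}·(1−ε)·√(2·log N)/(√(2π)·(1+2(1−ε)²·log N)) > 1`,
`Pr(max_i G_i < (1−ε)·√(2·min_j Var(G_j)·log N)) ≤ exp(−N^ε)`. -/
theorem stmt15 {Ω : Type*} [MeasurableSpace Ω] (μ : Measure Ω) [IsProbabilityMeasure μ]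
    (N : ℕ) (hN : 2 ≤ N)
    (G : Fin N → Ω → ℝ) (v : Fin N → NNReal)
    (hGindep : iIndepFun G μ)
    (hG : ∀ i, Measure.map (G i) μ = gaussianReal 0 (v i))
    (ε : ℝ) (hε : ε ∈ Set.Ioo (0 : ℝ) 1)
    (hNε : 1 < (N : ℝ) ^ (ε - ε ^ 2) * (1 - ε) * Real.sqrt (2 * Real.log N) /
        (Real.sqrt (2 * Real.pi) * (1 + 2 * (1 - ε) ^ 2 * Real.log N))) :
    μ {ω | Finset.univ.sup' (Finset.univ_nonempty_iff.mpr ⟨⟨0, by omega⟩⟩)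
          (fun i => G i ω) <
        (1 - ε) * Real.sqrt
          (2 * (Finset.univ.inf' (Finset.univ_nonempty_iff.mpr ⟨⟨0, by omega⟩⟩)
              fun j => ((v j : ℝ))) * Real.log N)} ≤
      ENNReal.ofReal (Real.exp (-(N : ℝ) ^ ε)) := by
  obtain ⟨j, -, hj⟩ := Finset.exists_mem_eq_inf' ⟨⟨0, by omega⟩, Finset.mem_univ _⟩
    fun j ↦ (v j : ℝ)
  have hN1 : (1 : ℝ) ≤ N := by exact_mod_cast (by omega : 1 ≤ N)
  set a := (1 - ε) * √(2 * log N) with ha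
  have ht : (1 - ε) * √(2 * v j * log N) = √(v j) * a := by
    rw [ha, show 2 * (v j : ℝ) * log N = v j * (2 * log N) by ring,
      sqrt_mul (NNReal.coe_nonneg _)]
    ring
  rw [hj, ht]
  rcases eq_or_ne (v j) 0 with hvj | hvj
  · rw [hGindep.measure_sup'_lt]
    refine (Finset.prod_eq_zero (Finset.mem_univ j) ?_).trans_le zero_le
    rw [measure_preimage_eq_of_map_eq_gaussianReal (hG j) measurableSet_Iio, hvj]
    simp
  have hvar : ∀ i, v j ≤ v i := fun i ↦ by
    exact_mod_cast hj ▸ Finset.inf'_le (fun j ↦ (v j : ℝ)) (Finset.mem_univ i)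
  have hp : (N : ℝ) ^ ε ≤ N * gaussianTailLowerBound a := by
    rw [ha, mul_gaussianTailLowerBound_eq hN1]
    exact le_mul_of_one_le_right (by positivity) hNε.le
  have ha0 : 0 ≤ a := mul_nonneg (by linarith [hε.2]) (sqrt_nonneg _)
  refine (hGindep.measure_sup'_lt_le_ofReal_exp_neg _ fun i ↦
    measure_preimage_Iio_le_ofReal_exp_neg (hG i) hvj (hvar i) ha0).trans ?_
  rw [Fintype.card_fin]
  exact ENNReal.ofReal_le_ofReal (exp_le_exp.2 (by linarith))
end

section
/- In the hypergraph model, let y ∈ Ω be the true community assignment, H ⊆ [n], and for a ∈ H let y^{(a)} ∈ Ω agree with y off a and satisfy y^{(a)}(a) ≠ y(a). Partition the index set ∪_{s=s_1}^{s_2}[n]^s into 𝒳 (tuples with no coordinate in H), 𝒴 (tuples with exactly one coordinate in H), and 𝒵 (tuples with at least two coordinates in H); for η ∈ {𝒳,𝒴,𝒵} let W_η agree with W on η and vanish elsewhere, and set 𝒳_a := ⟨W_𝒳, Φ*(A_{y^{(a)}} − A_y)⟩, 𝒴_a := ⟨W_𝒴, Φ*(A_{y^{(a)}} − A_y)⟩,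 𝒵_a := ⟨W_𝒵, Φ*(A_{y^{(a)}} − A_y)⟩. Then: (1) 𝒳_a = 0 for every a ∈ H; (2) for each a ∈ H, 𝒴_a and 𝒵_a are independent; (3) {𝒴_g}_{g∈H} is a collection of independent centered Gaussian random variables, and Var(𝒴_g) = Σ_{s=s_1}^{s_2} Σ_{j=1}^{s} Σ over (i_1,...,i_{j−1},i_{j+1},...,i_s) ∈ ([n]\H)^{s−1} of σ^{−2}_{(i_1,...,g,...,i_s)} · (φ(y(i_1),...,y^{(g)}(g),...,y(i_s)) − φ(y(i_1),...,y(g),...,y(i_s)))². -/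
open Finset MeasureTheory ProbabilityTheory

/-- `L_Φ(x,y)` for the hypergraph model. -/
noncomputable def hLPhi {n k : ℕ} (s₁ s₂ : ℕ)
    (φ : (s : ℕ) → (Fin s → Fin k) → ℝ)
    (σ : (s : ℕ) → (Fin s → Fin n) → ℝ)
    (x y : Fin n → Fin k) : ℝ :=
  ∑ s ∈ Finset.Icc s₁ s₂, ∑ t : Fin s → Fin n,
    (φ s (x ∘ t) - φ s (y ∘ t)) ^ 2 / (σ s t) ^ 2

/-- Equivalence of community assignments in the hypergraph model. -/
def hEquiv {n k : ℕ} (s₁ s₂ : ℕ) (φ : (s : ℕ) → (Fin s → Fin k) → ℝ)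
    (x x' : Fin n → Fin k) : Prop :=
  ∃ η : Fin k → Fin k, Function.Bijective η ∧ x' = η ∘ x ∧
    ∀ s ∈ Finset.Icc s₁ s₂, ∀ t : Fin s → Fin n, φ s (x' ∘ t) = φ s (x ∘ t)

/-- Space of noise realizations. -/
def HNoise (n : ℕ) : Type := (s : ℕ) → (Fin s → Fin n) → ℝ

instance (n : ℕ) : MeasurableSpace (HNoise n) := by unfold HNoise; infer_instance

/-- Index set of hyperedges of arities in `[s₁, s₂]`. -/
def HIdx (n s₁ s₂ : ℕ) : Type := Σ s : Set.Icc s₁ s₂, (Fin s.1 → Fin n)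


/-- Number of coordinates of the tuple `t` lying in `H`. -/
def countH {n s : ℕ} (H : Finset (Fin n)) (t : Fin s → Fin n) : ℕ :=
  (Finset.univ.filter fun r => t r ∈ H).card

/-- `⟨W_η, Φ*(A_{ynew} − A_y)⟩`, where `η` is the set of hyperedges whose number of
coordinates in `H` satisfies the predicate `cpred`. -/
noncomputable def hProj {n k : ℕ} (s₁ s₂ : ℕ)
    (φ : (s : ℕ) → (Fin s → Fin k) → ℝ)
    (σ : (s : ℕ) → (Fin s → Fin n) → ℝ)
    (y ynew : Fin n → Fin k) (H : Finset (Fin n))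
    (cpred : ℕ → Prop) [DecidablePred cpred] (w : HNoise n) : ℝ :=
  ∑ s ∈ Finset.Icc s₁ s₂, ∑ t : Fin s → Fin n,
    if cpred (countH H t) then
      w s t * ((1 / σ s t) * (φ s (ynew ∘ t) - φ s (y ∘ t)))
    else 0

/-- The variance expression: the sum over hyperedges containing `g` exactly once (at
position `j`) and otherwise avoiding `H` of `σ⁻²·(φ(…y^{(g)}(g)…) − φ(…y(g)…))²`. -/
noncomputable def hVarExpr {n k : ℕ} (s₁ s₂ : ℕ)
    (φ : (s : ℕ) → (Fin s → Fin k) → ℝ)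
    (σ : (s : ℕ) → (Fin s → Fin n) → ℝ)
    (y ynew : Fin n → Fin k) (H : Finset (Fin n)) (g : Fin n) : ℝ :=
  ∑ s ∈ Finset.Icc s₁ s₂, ∑ j : Fin s, ∑ t : Fin s → Fin n,
    if t j = g ∧ ∀ r : Fin s, r ≠ j → t r ∉ H then
      ((1 / σ s t) * (φ s (ynew ∘ t) - φ s (y ∘ t))) ^ 2
    else 0

/-!
Each of `𝒳_a`, `𝒴_a`, `𝒵_a` is a linear form in the independent standard Gaussian entries of `W`,
supported on its class of hyperedges. Changing the label of `a` only affects hyperedges through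
`a`, so all coefficients of `𝒳_a` vanish, and the coefficients of `𝒴_g` vanish outside the
hyperedges meeting `H` only at `g`. These supports are pairwise disjoint (and disjoint from that
of `𝒵_a`), which gives the independence statements, and a linear form in independent standard
Gaussians is a centred Gaussian whose variance is the sum of the squared coefficients.
-/

open Function
open scoped NNReal

namespace ProbabilityTheory

section Independence

variable {Ω ι κ : Type*} [MeasurableSpace Ω] {μ : Measure Ω}

theorem iIndepFun.comp_disjoint_blocks {β γ : Type*} [MeasurableSpace β] [MeasurableSpace γ]
    {f : ι → Ω → β} (h : iIndepFun f μ) (hf : ∀ i, Measurable (f i))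
    {B : κ → Finset ι} (hB : Pairwise (Disjoint on B)) {ψ : (g : κ) → (B g → β) → γ}
    (hψ : ∀ g, Measurable (ψ g)) :
    iIndepFun (fun g ω => ψ g fun i => f i ω) μ := by
  classical
  have := h.isProbabilityMeasure
  rw [iIndepFun_iff_measure_inter_preimage_eq_mul]
  intro S
  induction S using Finset.induction_on with
  | empty => simp
  | insert g₀ S hg₀ ih =>
    intro E hE
    set U := S.biUnion B
    have hsub : ∀ g ∈ S, B g ⊆ U := fun g hg => Finset.subset_biUnion_of_mem B hg
    -- the blocks in `S` only see the coordinates in `U`, which are independent of `B g₀`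
    let D : Set (U → β) :=
      ⋂ g : S, (fun x : U → β => ψ g fun i => x ⟨i, hsub g g.2 i.2⟩) ⁻¹' E g
    have hD : MeasurableSet D := MeasurableSet.iInter fun g =>
      (hψ g).comp (measurable_pi_lambda _ fun i => measurable_pi_apply _)
        (hE g (Finset.mem_insert_of_mem g.2))
    have hpre : (fun ω (i : U) => f i ω) ⁻¹' D
        = ⋂ g ∈ S, (fun ω => ψ g fun i => f i ω) ⁻¹' E g := by
      ext ω
      simp [D]
    have hdisj : Disjoint (B g₀) U :=
      (Finset.disjoint_biUnion_right _ _ _).2 fun g hg => hB fun h => hg₀ (h ▸ hg)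
    have hind : IndepFun (fun ω => ψ g₀ fun i => f i ω) (fun ω (i : U) => f i ω) μ :=
      (h.indepFun_finset (B g₀) U hdisj hf).comp (hψ g₀) measurable_id
    rw [Finset.set_biInter_insert, Finset.prod_insert hg₀, ← hpre,
      hind.measure_inter_preimage_eq_mul _ _ (hE g₀ (Finset.mem_insert_self _ _)) hD, hpre,
      ih fun g hg => hE g (Finset.mem_insert_of_mem hg)]

theorem iIndepFun.iIndepFun_finsetSum_mul_blocks {f : ι → Ω → ℝ} (h : iIndepFun f μ)
    (hf : ∀ i, Measurable (f i)) {B : κ → Finset ι} (hB : Pairwise (Disjoint on B))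
    (c : κ → ι → ℝ) : iIndepFun (fun g ω => ∑ i ∈ B g, c g i * f i ω) μ := by
  have := h.comp_disjoint_blocks hf hB (ψ := fun g x => ∑ i : B g, c g i * x i)
    fun g => Finset.measurable_sum _ fun i _ => (measurable_pi_apply i).const_mul _
  convert this using 3 with g ω
  exact (Finset.sum_coe_sort (B g) fun i => c g i * f i ω).symm

theorem iIndepFun.indepFun_finsetSum_mul {f : ι → Ω → ℝ} (h : iIndepFun f μ)
    (hf : ∀ i, Measurable (f i)) {S T : Finset ι} (hST : Disjoint S T) (c d : ι → ℝ) :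
    IndepFun (fun ω => ∑ i ∈ S, c i * f i ω) (fun ω => ∑ i ∈ T, d i * f i ω) μ := by
  have := (h.indepFun_finset S T hST hf).comp (φ := fun x : S → ℝ => ∑ i : S, c i * x i)
    (ψ := fun x : T → ℝ => ∑ i : T, d i * x i)
    (Finset.measurable_sum _ fun i _ => (measurable_pi_apply i).const_mul _)
    (Finset.measurable_sum _ fun i _ => (measurable_pi_apply i).const_mul _)
  convert this using 2 with ω ω
  · exact (Finset.sum_coe_sort S fun i => c i * f i ω).symm
  · exact (Finset.sum_coe_sort T fun i => d i * f i ω).symm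

theorem iIndepFun.map_finsetSum_mul_eq_gaussianReal {f : ι → Ω → ℝ} (h : iIndepFun f μ)
    (hf : ∀ i, Measurable (f i)) {m : ι → ℝ} {v : ι → ℝ≥0}
    (hgauss : ∀ i, μ.map (f i) = gaussianReal (m i) (v i)) (c : ι → ℝ) (S : Finset ι) :
    μ.map (fun ω => ∑ i ∈ S, c i * f i ω)
      = gaussianReal (∑ i ∈ S, c i * m i) (∑ i ∈ S, (c i ^ 2).toNNReal * v i) := by
  classical
  have := h.isProbabilityMeasure
  induction S using Finset.induction_on with
  | empty => simp [gaussianReal_zero_var]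
  | insert i S hi ih =>
    have hind : IndepFun (fun ω => c i * f i ω) (fun ω => ∑ j ∈ S, c j * f j ω) μ := by
      simpa using h.indepFun_finsetSum_mul hf (Finset.disjoint_singleton_left.2 hi) c c
    have hmap : μ.map (fun ω => c i * f i ω)
        = gaussianReal (c i * m i) ((c i ^ 2).toNNReal * v i) := by
      rw [Real.toNNReal_of_nonneg (sq_nonneg _), ← gaussianReal_map_const_mul, ← hgauss i,
        Measure.map_map (measurable_const_mul _) (hf i)]
      rfl
    simp_rw [Finset.sum_insert hi]
    exact gaussianReal_add_gaussianReal_of_indepFun hind hmap ih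

end Independence

end ProbabilityTheory

instance (n s₁ s₂ : ℕ) : Fintype (HIdx n s₁ s₂) :=
  inferInstanceAs (Fintype (Σ s : Set.Icc s₁ s₂, Fin s.1 → Fin n))

theorem sum_Icc_sum_eq_sum_HIdx {n : ℕ} (s₁ s₂ : ℕ) {M : Type*} [AddCommMonoid M]
    (F : (s : ℕ) → (Fin s → Fin n) → M) :
    ∑ s ∈ Finset.Icc s₁ s₂, ∑ t, F s t = ∑ i : HIdx n s₁ s₂, F i.1 i.2 := by
  change _ = ∑ i : Σ s : Set.Icc s₁ s₂, Fin s.1 → Fin n, F i.1 i.2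
  rw [← Finset.univ_sigma_univ, Finset.sum_sigma]
  exact Finset.sum_subtype (Finset.Icc s₁ s₂) (fun s => by simp) fun s => ∑ t, F s t

section countH

variable {n s : ℕ} {H : Finset (Fin n)} {t : Fin s → Fin n}

theorem countH_eq_zero_iff : countH H t = 0 ↔ ∀ r, t r ∉ H := by
  simp [countH, Finset.filter_eq_empty_iff]

theorem countH_eq_one_iff : countH H t = 1 ↔ ∃ j, t j ∈ H ∧ ∀ r, r ≠ j → t r ∉ H := by
  simp only [countH, Finset.card_eq_one, Finset.eq_singleton_iff_unique_mem,
    Finset.mem_filter, Finset.mem_univ, true_and]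
  exact exists_congr fun j => and_congr_right fun _ => forall_congr' fun r => by tauto

theorem eq_of_countH_eq_one (h : countH H t = 1) {r r' : Fin s} (hr : t r ∈ H)
    (hr' : t r' ∈ H) : r = r' := by
  obtain ⟨j, -, hj⟩ := countH_eq_one_iff.1 h
  by_contra hne
  rcases eq_or_ne r j with rfl | hrj
  · exact hj r' (Ne.symm hne) hr'
  · exact hj r hrj hr

theorem exists_sole_coord_in_eq_iff {g : Fin n} (hg : g ∈ H) :
    (∃ j, t j = g ∧ ∀ r, r ≠ j → t r ∉ H) ↔ countH H t = 1 ∧ ∃ r, t r = g := by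
  constructor
  · rintro ⟨j, rfl, hj⟩
    exact ⟨countH_eq_one_iff.2 ⟨j, hg, hj⟩, j, rfl⟩
  · rintro ⟨h, r, rfl⟩
    exact ⟨r, rfl, fun r' hr' hr'H => hr' (eq_of_countH_eq_one h hr'H hg)⟩

end countH

section Projections

variable {n k s₁ s₂ : ℕ} (φ : (s : ℕ) → (Fin s → Fin k) → ℝ) (σ : (s : ℕ) → (Fin s → Fin n) → ℝ)
  (y ynew : Fin n → Fin k) (H : Finset (Fin n))

/-- The entry of `Φ * (A_{ynew} - A_y)` at the hyperedge `i`. -/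
noncomputable def hCoef (i : HIdx n s₁ s₂) : ℝ :=
  1 / σ i.1 i.2 * (φ i.1 (ynew ∘ i.2) - φ i.1 (y ∘ i.2))

theorem hCoef_eq_zero {a : Fin n} (hy : ∀ b, b ≠ a → ynew b = y b) {i : HIdx n s₁ s₂}
    (hi : ∀ r, i.2 r ≠ a) : hCoef φ σ y ynew i = 0 := by
  have : ynew ∘ i.2 = y ∘ i.2 := funext fun r => hy _ (hi r)
  simp [hCoef, this]

theorem hProj_eq_sum (P : ℕ → Prop) [DecidablePred P] :
    hProj s₁ s₂ φ σ y ynew H P = fun w =>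
      ∑ i : HIdx n s₁ s₂ with P (countH H i.2), hCoef φ σ y ynew i * w i.1 i.2 := by
  funext w
  rw [hProj, sum_Icc_sum_eq_sum_HIdx, Finset.sum_filter]
  simp only [hCoef, mul_comm]

theorem hProj_countH_zero_eq_zero {a : Fin n} (ha : a ∈ H) (hy : ∀ b, b ≠ a → ynew b = y b) :
    hProj s₁ s₂ φ σ y ynew H (· = 0) = 0 := by
  rw [hProj_eq_sum]
  funext w
  refine Finset.sum_eq_zero fun i hi => ?_
  have hiH := countH_eq_zero_iff.1 (Finset.mem_filter.1 hi).2
  rw [hCoef_eq_zero φ σ y ynew hy fun r hr => hiH r (hr ▸ ha), zero_mul]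

/-- The part of `𝒴` on which `A_{y^{(g)}} - A_y` can be nonzero. -/
def yBlock (s₁ s₂ : ℕ) (g : Fin n) : Finset (HIdx n s₁ s₂) :=
  {i | countH H i.2 = 1 ∧ ∃ r, i.2 r = g}

theorem pairwise_disjoint_yBlock :
    Pairwise (Disjoint on fun g : H => yBlock H s₁ s₂ g) := by
  intro g g' hne
  refine Finset.disjoint_left.2 fun i hi hi' => hne (Subtype.ext ?_)
  simp only [yBlock, Finset.mem_filter, Finset.mem_univ, true_and] at hi hi'
  obtain ⟨h1, r, hr⟩ := hi
  obtain ⟨-, r', hr'⟩ := hi'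
  exact hr.symm.trans ((congrArg i.2 (eq_of_countH_eq_one h1 (hr ▸ g.2) (hr' ▸ g'.2))).trans hr')

theorem hProj_countH_one_eq_sum_yBlock {g : Fin n} (hy : ∀ b, b ≠ g → ynew b = y b) :
    hProj s₁ s₂ φ σ y ynew H (· = 1) = fun w =>
      ∑ i ∈ yBlock H s₁ s₂ g, hCoef φ σ y ynew i * w i.1 i.2 := by
  rw [hProj_eq_sum]
  funext w
  rw [yBlock, ← Finset.filter_filter]
  refine (Finset.sum_filter_of_ne fun i _ hi => ?_).symm
  by_contra hg
  push Not at hg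
  exact hi (by rw [hCoef_eq_zero φ σ y ynew hy hg, zero_mul])

theorem hVarExpr_eq_sum_yBlock {g : Fin n} (hg : g ∈ H) :
    hVarExpr s₁ s₂ φ σ y ynew H g = ∑ i ∈ yBlock H s₁ s₂ g, hCoef φ σ y ynew i ^ 2 := by
  rw [yBlock, Finset.sum_filter, hVarExpr]
  simp only [hCoef]
  rw [← sum_Icc_sum_eq_sum_HIdx s₁ s₂ fun s t =>
    if countH H t = 1 ∧ ∃ r, t r = g then (1 / σ s t * (φ s (ynew ∘ t) - φ s (y ∘ t))) ^ 2
    else 0]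
  refine Finset.sum_congr rfl fun s _ => ?_
  rw [Finset.sum_comm]
  refine Finset.sum_congr rfl fun t _ => ?_
  rw [Fintype.sum_ite_eq_ite_exists _ ?_]
  · simp only [exists_sole_coord_in_eq_iff hg]
  rintro j j' ⟨rfl, hj⟩ ⟨hj', -⟩
  by_contra hne
  exact hj j' (Ne.symm hne) (hj' ▸ hg)

end Projections

theorem stmt16_general {n : ℕ} (k : ℕ)
    (s₁ s₂ : ℕ)
    (φ : (s : ℕ) → (Fin s → Fin k) → ℝ)
    (σ : (s : ℕ) → (Fin s → Fin n) → ℝ)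
    (y : Fin n → Fin k) (H : Finset (Fin n))
    (ya : Fin n → (Fin n → Fin k))
    (hya : ∀ a : Fin n, (∀ b : Fin n, b ≠ a → ya a b = y b) ∧ ya a a ≠ y a)
    (μ : Measure (HNoise n))
    (hindep : iIndepFun
      (fun (a : HIdx n s₁ s₂) (w : HNoise n) => w a.1 a.2) μ)
    (hgauss : ∀ a : HIdx n s₁ s₂,
      Measure.map (fun w : HNoise n => w a.1 a.2) μ = gaussianReal 0 1) :
    (∀ a ∈ H, ∀ w : HNoise n,
        hProj s₁ s₂ φ σ y (ya a) H (· = 0) w = 0) ∧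
    (∀ a ∈ H,
        ProbabilityTheory.IndepFun (hProj s₁ s₂ φ σ y (ya a) H (· = 1))
          (hProj s₁ s₂ φ σ y (ya a) H (2 ≤ ·)) μ) ∧
    iIndepFun
      (fun g : {g : Fin n // g ∈ H} => hProj s₁ s₂ φ σ y (ya g.1) H (· = 1)) μ ∧
    (∀ g ∈ H,
        Measure.map (hProj s₁ s₂ φ σ y (ya g) H (· = 1)) μ =
          gaussianReal 0 (Real.toNNReal (hVarExpr s₁ s₂ φ σ y (ya g) H g))) := by
  have hW : ∀ i : HIdx n s₁ s₂, Measurable fun w : HNoise n => w i.1 i.2 :=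
    fun i => (measurable_pi_apply _).comp (measurable_pi_apply _)
  refine ⟨fun a ha => congrFun (hProj_countH_zero_eq_zero φ σ y (ya a) H ha (hya a).1),
    fun a _ => ?_, ?_, fun g hg => ?_⟩
  · rw [hProj_eq_sum, hProj_eq_sum]
    exact hindep.indepFun_finsetSum_mul hW
      (Finset.disjoint_filter.2 fun i _ h1 h2 => by omega) _ _
  · convert hindep.iIndepFun_finsetSum_mul_blocks hW (pairwise_disjoint_yBlock H)
      fun g => hCoef φ σ y (ya g) using 2 with g
    exact hProj_countH_one_eq_sum_yBlock φ σ y (ya g) H (hya g).1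
  · rw [hProj_countH_one_eq_sum_yBlock φ σ y (ya g) H (hya g).1,
      hVarExpr_eq_sum_yBlock φ σ y (ya g) H hg, hindep.map_finsetSum_mul_eq_gaussianReal hW hgauss]
    simp only [mul_zero, Finset.sum_const_zero, mul_one]
    rw [Real.toNNReal_sum_of_nonneg fun i _ => sq_nonneg _]

/-- the decomposition `⟨W, Φ*(A_{y^{(a)}} − A_y)⟩ = 𝒳_a + 𝒴_a + 𝒵_a`
satisfies: (1) `𝒳_a = 0` for `a ∈ H`; (2) `𝒴_a` and `𝒵_a` are independent; (3) the `𝒴_g`,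
`g ∈ H`, are independent centered Gaussians with the stated variances. -/
theorem stmt16 {n : ℕ} (k : ℕ) (hkn : k ≤ n) (hk : 2 ≤ k)
    (s₁ s₂ : ℕ) (hs₁ : 2 ≤ s₁) (hs₁₂ : s₁ ≤ s₂)
    (φ : (s : ℕ) → (Fin s → Fin k) → ℝ) (hφ : ∀ s v, 0 ≤ φ s v)
    (σ : (s : ℕ) → (Fin s → Fin n) → ℝ) (hσ : ∀ s t, 0 < σ s t)
    (y : Fin n → Fin k) (H : Finset (Fin n))
    (ya : Fin n → (Fin n → Fin k))
    (hya : ∀ a : Fin n, (∀ b : Fin n, b ≠ a → ya a b = y b) ∧ ya a a ≠ y a)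
    (μ : Measure (HNoise n)) [IsProbabilityMeasure μ]
    (hindep : iIndepFun
      (fun (a : HIdx n s₁ s₂) (w : HNoise n) => w a.1 a.2) μ)
    (hgauss : ∀ a : HIdx n s₁ s₂,
      Measure.map (fun w : HNoise n => w a.1 a.2) μ = gaussianReal 0 1) :
    (∀ a ∈ H, ∀ w : HNoise n,
        hProj s₁ s₂ φ σ y (ya a) H (· = 0) w = 0) ∧
    (∀ a ∈ H,
        ProbabilityTheory.IndepFun (hProj s₁ s₂ φ σ y (ya a) H (· = 1))
          (hProj s₁ s₂ φ σ y (ya a) H (2 ≤ ·)) μ) ∧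
    iIndepFun
      (fun g : {g : Fin n // g ∈ H} => hProj s₁ s₂ φ σ y (ya g.1) H (· = 1)) μ ∧
    (∀ g ∈ H,
        Measure.map (hProj s₁ s₂ φ σ y (ya g) H (· = 1)) μ =
          gaussianReal 0 (Real.toNNReal (hVarExpr s₁ s₂ φ σ y (ya g) H g))) :=
  stmt16_general k s₁ s₂ φ σ y H ya hya μ hindep hgauss
end
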